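/- For λ ∈ Λ⁺, regarding A-modules as Ã^α-modules by restriction: (i) there is an injective Ã^α-homomorphism Z̃^{(λ,0)} → W^λ sending c̃^{(λ,0)}_t ↦ c^λ_t for t ∈ T⁺_α(λ); (ii) there is an Ã^α-isomorphism Z̃^{(λ,1)} ≅ W^λ sending c̃^{(λ,1)}_t ↦ c^λ_t for t ∈ T(λ); (iii) L^λ contains L̃^{(λ,0)} as an Ã^α-submodule; (iv) L^λ/L̃^{(λ,0)} ≅ L̃^{(λ,1)} as Ã^α-modules. -/

import Mathlib

open MulOpposite

noncomputable section

universe u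

section CompFactors

variable (A : Type u) [Ring A]

/-- The `i`-th factor of a series of submodules. -/
abbrev CompSeriesFactor {M : Type u} [AddCommGroup M] [Module A M]
    (s : CompositionSeries (Submodule A M)) (i : Fin s.length) : Type u :=
  ↥(s i.succ) ⧸ Submodule.comap (s i.succ).subtype (s i.castSucc)

open Classical in
/-- The multiplicity of `N` among the composition factors of `M` (returning `0` if `M`
has no composition series); by the Jordan–Hölder theorem this does not depend on the
choice of composition series. -/
def compMult (M : Type u) [AddCommGroup M] [Module A M]
    (N : Type u) [AddCommGroup N] [Module A N] : ℕ :=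
  if h : ∃ s : CompositionSeries (Submodule A M), s.head = ⊥ ∧ s.last = ⊤ then
    (Finset.univ.filter fun i : Fin h.choose.length =>
      Nonempty (CompSeriesFactor A h.choose i ≃ₗ[A] N)).card
  else 0

/-- `N` is (isomorphic to) a composition factor, i.e. a simple subquotient, of `M`. -/
def IsCompFactor (M N : Type u) [AddCommGroup M] [Module A M]
    [AddCommGroup N] [Module A N] : Prop :=
  ∃ p q : Submodule A M, p ≤ q ∧
    IsSimpleModule A (↥q ⧸ Submodule.comap q.subtype p) ∧
    Nonempty ((↥q ⧸ Submodule.comap q.subtype p) ≃ₗ[A] N)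

/-- `M₁` and `M₂` have a common composition factor. -/
def ShareFactor (M₁ M₂ : Type u) [AddCommGroup M₁] [Module A M₁]
    [AddCommGroup M₂] [Module A M₂] : Prop :=
  ∃ (p q : Submodule A M₁) (p' q' : Submodule A M₂), p ≤ q ∧ p' ≤ q' ∧
    IsSimpleModule A (↥q ⧸ Submodule.comap q.subtype p) ∧
    Nonempty ((↥q ⧸ Submodule.comap q.subtype p) ≃ₗ[A]
      (↥q' ⧸ Submodule.comap q'.subtype p'))

/-- `e` is a primitive central idempotent (a block idempotent) of `A`. -/
def IsPrimCentralIdem (e : A) : Prop :=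
  IsIdempotentElem e ∧ e ∈ Set.center A ∧ e ≠ 0 ∧
    ∀ f g : A, IsIdempotentElem f → IsIdempotentElem g → f ∈ Set.center A →
      g ∈ Set.center A → f * g = 0 → e = f + g → f = 0 ∨ g = 0

/-- A module belongs to the block of the central idempotent `e` when `e` acts as
the identity on it. -/
def InBlock (e : A) (M : Type u) [AddCommGroup M] [Module A M] : Prop :=
  ∀ m : M, e • m = m

/-- `P` is a projective cover of `L`. -/
def IsProjCover (P L : Type u) [AddCommGroup P] [Module A P]
    [AddCommGroup L] [Module A L] : Prop :=
  Module.Projective A P ∧ ∃ f : P →ₗ[A] L, Function.Surjective f ∧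
    ∀ N : Submodule A P, N ⊔ LinearMap.ker f = ⊤ → N = ⊤

end CompFactors

/-- The bilinear form on `ι → R` induced by a matrix `φ`. -/
def formSum {R ι : Type u} [CommRing R] [Fintype ι] (φ : ι → ι → R) (x y : ι → R) : R :=
  ∑ s, ∑ t, x s * φ s t * y t

section Cellular

variable (R A : Type u) [CommRing R] [Ring A] [Algebra R A]
variable (Λp : Type u) [PartialOrder Λp] (T : Λp → Type u) [∀ l, Fintype (T l)]

/-- A cell datum (Graham–Lehrer) for the `R`-algebra `A`: a cellular basis
`c l s t` indexed by pairs of elements of `T l` for `l` in the poset `Λp`, an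
anti-automorphism `star` swapping the two indices, and structure constants
`coeff` for right multiplication, acting on the second index modulo higher terms. -/
structure CellDatum where
  c : ∀ l, T l → T l → A
  basis : Module.Basis ((l : Λp) × (T l × T l)) R A
  basis_eq : ∀ l s t, basis ⟨l, (s, t)⟩ = c l s t
  star : A →ₗ[R] A
  star_mul : ∀ a b, star (a * b) = star b * star a
  star_c : ∀ l s t, star (c l s t) = c l t s
  coeff : ∀ l, T l → A → T l → R
  mul_rule : ∀ (l) (s t : T l) (a : A),
    c l s t * a - ∑ v, coeff l t a v • c l s v ∈
      Submodule.span R {x : A | ∃ l' s' t', l < l' ∧ x = c l' s' t'}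

variable {R A Λp T}

namespace CellDatum

variable (D : CellDatum R A Λp T)

/-- The span of the cellular basis elements with index strictly above `l`. -/
def Aup (l : Λp) : Submodule R A :=
  Submodule.span R {x : A | ∃ l' s' t', l < l' ∧ x = D.c l' s' t'}

/-- The span of the cellular basis elements with index in `P`. -/
def cellSpan (P : Set Λp) : Submodule R A :=
  Submodule.span R {x : A | ∃ l s t, l ∈ P ∧ x = D.c l s t}

/-- The data of right standard (cell) modules: each `T l → R` is a right `A`-module
(i.e. a module over `Aᵐᵒᵖ`), the action is `R`-bilinear, and on the standard basis it is
given by the structure constants of the cell datum. -/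
def RightStd [∀ l, DecidableEq (T l)] [∀ l, Module Aᵐᵒᵖ (T l → R)] : Prop :=
  (∀ (l : Λp) (r : R) (a : Aᵐᵒᵖ) (x : T l → R), a • (r • x) = r • (a • x)) ∧
  (∀ (l : Λp) (t : T l) (a : A),
    (op a) • (Pi.single t 1 : T l → R) = fun v => D.coeff l t a v)

/-- The data of left standard (cell) modules. -/
def LeftStd [∀ l, DecidableEq (T l)] [∀ l, Module A (T l → R)] : Prop :=
  (∀ (l : Λp) (r : R) (a : A) (x : T l → R), a • (r • x) = r • (a • x)) ∧
  (∀ (l : Λp) (t : T l) (a : A),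
    a • (Pi.single t 1 : T l → R) = fun v => D.coeff l t (D.star a) v)

/-- `φ` is the matrix of the canonical bilinear form on the standard modules:
`c l u s * c l t v ≡ φ l s t • c l u v` modulo `A^{∨l}`. -/
def FormData (φ : ∀ l, T l → T l → R) : Prop :=
  ∀ (l : Λp) (s t u v : T l), D.c l u s * D.c l t v - φ l s t • D.c l u v ∈ D.Aup l

section Idem

variable {Λt M X : Type u} [PartialOrder Λt] [PartialOrder X] [Fintype M]

/-- Assumptions (A1)–(A4): `ι : Λp → Λt` realizes the cell poset inside the
bigger poset `Λt`, `κ : M → Λt` realizes the index set of the orthogonal idempotent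
decomposition `1 = ∑ e μ`, each `e μ` lies in the span of the `c l s t` with
`ι l ≥ κ μ`, and every column of the cellular basis is fixed by some `e μ`. -/
structure IdemData (ι : Λp → Λt) (κ : M → Λt) (e : M → A) : Prop where
  order_iff : ∀ l l', ι l ≤ ι l' ↔ l ≤ l'
  kappa_inj : Function.Injective κ
  ne_zero : ∀ μ, e μ ≠ 0
  idem : ∀ μ, e μ * e μ = e μ
  orth : ∀ μ ν, μ ≠ ν → e μ * e ν = 0
  sum_one : ∑ μ, e μ = 1
  mem_span : ∀ μ, e μ ∈ Submodule.span R {x : A | ∃ l s t, κ μ ≤ ι l ∧ x = D.c l s t}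
  exists_idem : ∀ (l) (t : T l), ∃ μ, (∀ s, D.c l s t * e μ = D.c l s t) ∧
    (∀ u, e μ * D.c l t u = D.c l t u)

/-- `T(λ,μ)`: the indices `t` whose column (resp. row) of the cellular basis is fixed
by right (resp. left) multiplication by `e μ`. -/
def Tset (e : M → A) (l : Λp) (μ : M) : Set (T l) :=
  {t | (∀ s, D.c l s t * e μ = D.c l s t) ∧ (∀ u, e μ * D.c l t u = D.c l t u)}

/-- `T⁺_α(λ)`. -/
def Tplus (e : M → A) (ι : Λp → Λt) (κ : M → Λt) (α : Λt → X) (l : Λp) : Set (T l) :=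
  {t | ∃ μ, t ∈ D.Tset e l μ ∧ α (ι l) = α (κ μ)}

/-- `T⁻_α(λ)`. -/
def Tminus (e : M → A) (ι : Λp → Λt) (κ : M → Λt) (α : Λt → X) (l : Λp) : Set (T l) :=
  {t | ∃ μ, t ∈ D.Tset e l μ ∧ α (κ μ) < α (ι l)}

/-- `I(λ,ε)`: `T⁺_α(λ)` for `ε = false` and `T⁻_α(λ)` for `ε = true`. -/
def Iset (e : M → A) (ι : Λp → Λt) (κ : M → Λt) (α : Λt → X) (l : Λp) : Bool → Set (T l)
  | false => D.Tplus e ι κ α l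
  | true => D.Tminus e ι κ α l

/-- `J̃(λ,ε)`: `T⁺_α(λ)` for `ε = false` and all of `T(λ)` for `ε = true`. -/
def Jset (e : M → A) (ι : Λp → Λt) (κ : M → Λt) (α : Λt → X) (l : Λp) : Bool → Set (T l)
  | false => D.Tplus e ι κ α l
  | true => Set.univ

/-- The Levi type subalgebra `A^α` (as a submodule). -/
def levi (e : M → A) (ι : Λp → Λt) (κ : M → Λt) (α : Λt → X) : Submodule R A :=
  Submodule.span R {x : A | ∃ l ε s t, s ∈ D.Iset e ι κ α l ε ∧ t ∈ D.Iset e ι κ α l ε ∧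
    x = D.c l s t}

/-- The parabolic type subalgebra `Ã^α` (as a submodule). -/
def parab (e : M → A) (ι : Λp → Λt) (κ : M → Λt) (α : Λt → X) : Submodule R A :=
  Submodule.span R {x : A | ∃ l ε s t, s ∈ D.Iset e ι κ α l ε ∧ t ∈ D.Jset e ι κ α l ε ∧
    x = D.c l s t}

/-- The span of the elements of the cellular basis of `A^α` of index strictly
above `(l,ε)` in `Ω`. -/
def upperOm (e : M → A) (ι : Λp → Λt) (κ : M → Λt) (α : Λt → X) (p : Λp × Bool) :
    Submodule R A :=
  Submodule.span R {x : A | ∃ (q : Λp × Bool) (s t : T q.1),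
    ((p.2 < q.2) ∨ (p.2 = q.2 ∧ p.1 < q.1)) ∧
    s ∈ D.Iset e ι κ α q.1 q.2 ∧ t ∈ D.Iset e ι κ α q.1 q.2 ∧ x = D.c q.1 s t}

/-- The span of the elements of the standard basis of `Ã^α` of index strictly
above `(l,ε)` in `Ω`. -/
def upperOmParab (e : M → A) (ι : Λp → Λt) (κ : M → Λt) (α : Λt → X) (p : Λp × Bool) :
    Submodule R A :=
  Submodule.span R {x : A | ∃ (q : Λp × Bool) (s t : T q.1),
    ((p.2 < q.2) ∨ (p.2 = q.2 ∧ p.1 < q.1)) ∧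
    s ∈ D.Iset e ι κ α q.1 q.2 ∧ t ∈ D.Jset e ι κ α q.1 q.2 ∧ x = D.c q.1 s t}

end Idem

end CellDatum

end Cellular

/-!
The basis vectors `c^λ_t`, `t ∈ T⁺_α(λ)`, span an `Ã^α`-submodule of `W^λ`. Take `t ∈ T(λ,μ)` and
a standard basis element `c_{m,s',t'}` of `Ã^α` with `s' ∈ T(m,ν)`. If `μ ≠ ν`, then
`c_{λ,t,t} c_{m,s',t'} = 0`. If `μ = ν` and `s' ∈ T⁻_α(m)`, then `α(λ) < α(m)`, so `m ≰ λ` and the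
product lies in the two-sided ideal spanned by the cells `≥ m`. If `μ = ν` and `t' ∈ T⁺_α(m)` is
fixed by `e_σ`, then `α(κ σ) = α(λ)`, and right multiplication by `e_σ` keeps the coefficients
in `W^λ` on `T(λ,σ) ⊆ T⁺_α(λ)`. So extension by zero gives (i), and also (ii), because
`J̃(λ,1) = T(λ)`.

Since `T(λ) = T⁺_α(λ) ∪ T⁻_α(λ)` and the form `φ` vanishes between the two parts (which belong to
different idempotents), a vector supported on `T⁺` lies in the radical of `W^λ` iff it is
orthogonal to `T⁺`. Also, a vector is orthogonal to `T⁻` iff it is congruent modulo the radical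
to a vector supported on `T⁺`. These two facts give (iii) and (iv).
-/

namespace CellDatum

section Cells

variable {R A Λp : Type u} [CommRing R] [Ring A] [Algebra R A] [PartialOrder Λp]
  {T : Λp → Type u} [∀ l, Fintype (T l)] (D : CellDatum R A Λp T)

theorem repr_c (l : Λp) (s t : T l) :
    D.basis.repr (D.c l s t) = Finsupp.single ⟨l, (s, t)⟩ 1 := by
  rw [← D.basis_eq, D.basis.repr_self]

theorem c_mem_cellSpan {P : Set Λp} {l : Λp} (hl : l ∈ P) (s t : T l) :
    D.c l s t ∈ D.cellSpan P :=
  Submodule.subset_span ⟨l, s, t, hl, rfl⟩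

theorem cellSpan_eq_span_basis (P : Set Λp) :
    D.cellSpan P = Submodule.span R (D.basis '' {i | i.1 ∈ P}) := by
  unfold cellSpan
  congr 1
  ext x
  constructor
  · rintro ⟨l, s, t, hl, rfl⟩
    exact ⟨⟨l, (s, t)⟩, hl, D.basis_eq l s t⟩
  · rintro ⟨⟨l, s, t⟩, hl, rfl⟩
    exact ⟨l, s, t, hl, D.basis_eq l s t⟩

theorem repr_eq_zero_of_mem_cellSpan {P : Set Λp} {x : A} (hx : x ∈ D.cellSpan P)
    {i : (l : Λp) × (T l × T l)} (hi : i.1 ∉ P) : D.basis.repr x i = 0 := by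
  rw [cellSpan_eq_span_basis, Module.Basis.mem_span_image] at hx
  exact Finsupp.notMem_support_iff.1 fun h => hi (hx h)

theorem repr_eq_zero_of_mem_Aup {l : Λp} {x : A} (hx : x ∈ D.Aup l) (s t : T l) :
    D.basis.repr x ⟨l, (s, t)⟩ = 0 :=
  D.repr_eq_zero_of_mem_cellSpan hx (lt_irrefl l)

theorem mul_mem_cellSpan {P : Set Λp} (hP : IsUpperSet P) {x : A} (hx : x ∈ D.cellSpan P)
    (a : A) : x * a ∈ D.cellSpan P := by
  induction hx using Submodule.span_induction with
  | mem y hy =>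
    obtain ⟨l, s, t, hl, rfl⟩ := hy
    rw [← sub_add_cancel (D.c l s t * a) (∑ v, D.coeff l t a v • D.c l s v)]
    refine add_mem (Submodule.span_le.2 ?_ (D.mul_rule l s t a)) ?_
    · rintro _ ⟨m, s', t', hlm, rfl⟩
      exact D.c_mem_cellSpan (hP hlm.le hl) s' t'
    · exact sum_mem fun v _ => Submodule.smul_mem _ _ (D.c_mem_cellSpan hl s v)
  | zero => rw [zero_mul]; exact zero_mem _
  | add y z _ _ hy hz => rw [add_mul]; exact add_mem hy hz
  | smul r y _ hy => rw [smul_mul_assoc]; exact Submodule.smul_mem _ _ hy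

theorem star_mem_cellSpan {P : Set Λp} {x : A} (hx : x ∈ D.cellSpan P) :
    D.star x ∈ D.cellSpan P := by
  rw [← Submodule.mem_comap]
  refine Submodule.span_le.2 ?_ hx
  rintro _ ⟨l, s, t, hl, rfl⟩
  rw [SetLike.mem_coe, Submodule.mem_comap, D.star_c]
  exact D.c_mem_cellSpan hl t s

theorem star_star (a : A) : D.star (D.star a) = a := by
  have h : D.star ∘ₗ D.star = LinearMap.id := D.basis.ext fun ⟨l, s, t⟩ => by
    simp [D.basis_eq, D.star_c]
  exact LinearMap.congr_fun h a

theorem mul_mem_cellSpan_left {P : Set Λp} (hP : IsUpperSet P) (a : A) {x : A}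
    (hx : x ∈ D.cellSpan P) : a * x ∈ D.cellSpan P := by
  rw [← D.star_star (a * x), D.star_mul]
  exact D.star_mem_cellSpan (D.mul_mem_cellSpan hP (D.star_mem_cellSpan hx) _)

theorem coeff_eq_repr {l : Λp} (s t : T l) (a : A) (v : T l) :
    D.coeff l t a v = D.basis.repr (D.c l s t * a) ⟨l, (s, v)⟩ := by
  classical
  have h := D.repr_eq_zero_of_mem_Aup (D.mul_rule l s t a) s v
  simp only [map_sub, map_sum, map_smul, repr_c, Finsupp.sub_apply, Finsupp.coe_finsetSum,
    Finset.sum_apply, Finsupp.smul_apply, Finsupp.single_apply, Sigma.mk.injEq, heq_eq_eq,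
    Prod.mk.injEq, true_and, smul_eq_mul, mul_ite, mul_one, mul_zero,
    Finset.sum_ite_eq', Finset.mem_univ, if_true, sub_eq_zero] at h
  exact h.symm

theorem coeff_mul {l : Λp} (t : T l) (a b : A) (v : T l) :
    D.coeff l t (a * b) v = ∑ w, D.coeff l t a w * D.coeff l w b v := by
  have h := D.repr_eq_zero_of_mem_Aup
    (D.mul_mem_cellSpan (isUpperSet_Ioi l) (D.mul_rule l t t a) b) t v
  rw [sub_mul, Finset.sum_mul, map_sub, Finsupp.sub_apply, sub_eq_zero, mul_assoc,
    ← D.coeff_eq_repr] at h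
  rw [h, map_sum, Finset.sum_apply']
  exact Finset.sum_congr rfl fun w _ => by
    rw [smul_mul_assoc, map_smul, Finsupp.smul_apply, smul_eq_mul, ← D.coeff_eq_repr]

theorem coeff_c_eq_zero_of_not_le {l m : Λp} (hml : ¬ m ≤ l) (t : T l) (s' t' : T m)
    (v : T l) : D.coeff l t (D.c m s' t') v = 0 := by
  rw [D.coeff_eq_repr t]
  exact D.repr_eq_zero_of_mem_cellSpan
    (D.mul_mem_cellSpan_left (isUpperSet_Ici m) _ (D.c_mem_cellSpan le_rfl s' t')) hml

end Cells

section Idempotents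

variable {R A Λp : Type u} [CommRing R] [Ring A] [Algebra R A] [PartialOrder Λp]
  {T : Λp → Type u} [∀ l, Fintype (T l)] (D : CellDatum R A Λp T)
  {Λt M X : Type u} [PartialOrder Λt] [PartialOrder X] [Fintype M]
  {ι : Λp → Λt} {κ : M → Λt} {e : M → A} {α : Λt → X}

theorem c_mul_c_eq_zero (hA : D.IdemData ι κ e) {l m : Λp} {s : T l} {t : T m} {μ ν : M}
    (hs : s ∈ D.Tset e l μ) (ht : t ∈ D.Tset e m ν) (hμν : μ ≠ ν) (u : T l) (v : T m) :
    D.c l u s * D.c m t v = 0 := by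
  rw [← hs.1 u, ← ht.2 v, mul_assoc, ← mul_assoc (e μ), hA.orth μ ν hμν, zero_mul, mul_zero]

theorem kappa_le_of_mem_Tset (hA : D.IdemData ι κ e) {l : Λp} {t : T l} {μ : M}
    (ht : t ∈ D.Tset e l μ) : κ μ ≤ ι l := by
  rcases subsingleton_or_nontrivial R with hR | hR
  · have := Module.subsingleton R A
    exact absurd (Subsingleton.elim _ _) (hA.ne_zero μ)
  by_contra hl
  have hup : IsUpperSet {m | κ μ ≤ ι m} := fun m m' hm h => h.trans ((hA.order_iff m m').2 hm)
  have hmem : D.c l t t ∈ D.cellSpan {m | κ μ ≤ ι m} :=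
    ht.2 t ▸ D.mul_mem_cellSpan hup (hA.mem_span μ) _
  have h := D.repr_eq_zero_of_mem_cellSpan hmem (i := ⟨l, (t, t)⟩) hl
  rw [repr_c, Finsupp.single_eq_same] at h
  exact one_ne_zero h

theorem mem_Tplus_or_mem_Tminus (hA : D.IdemData ι κ e) (hα : Monotone α) (l : Λp)
    (t : T l) : t ∈ D.Tplus e ι κ α l ∨ t ∈ D.Tminus e ι κ α l := by
  obtain ⟨μ, htμ⟩ := hA.exists_idem l t
  rcases (hα (D.kappa_le_of_mem_Tset hA htμ)).lt_or_eq with h | h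
  · exact Or.inr ⟨μ, htμ, h⟩
  · exact Or.inl ⟨μ, htμ, h.symm⟩

theorem form_eq_zero_of_ne (hA : D.IdemData ι κ e) {φ : ∀ l, T l → T l → R}
    (hφ : D.FormData φ) {l : Λp} {s t : T l} {μ ν : M} (hs : s ∈ D.Tset e l μ)
    (ht : t ∈ D.Tset e l ν) (hμν : μ ≠ ν) : φ l s t = 0 := by
  have h := hφ l s t s t
  rw [D.c_mul_c_eq_zero hA hs ht hμν, zero_sub, neg_mem_iff] at h
  have h0 := D.repr_eq_zero_of_mem_Aup h s t
  rwa [map_smul, repr_c, Finsupp.smul_apply, Finsupp.single_eq_same, smul_eq_mul,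
    mul_one] at h0

theorem form_Tplus_Tminus (hA : D.IdemData ι κ e) {φ : ∀ l, T l → T l → R}
    (hφ : D.FormData φ) (l : Λp) : ∀ s ∈ D.Tplus e ι κ α l, ∀ t ∈ D.Tminus e ι κ α l,
      φ l s t = 0 ∧ φ l t s = 0 := by
  intro s hs t ht
  obtain ⟨μ, hsμ, hμ⟩ := hs
  obtain ⟨ν, htν, hν⟩ := ht
  have hμν : μ ≠ ν := by rintro rfl; exact hν.ne hμ.symm
  exact ⟨D.form_eq_zero_of_ne hA hφ hsμ htν hμν, D.form_eq_zero_of_ne hA hφ htν hsμ hμν.symm⟩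

theorem coeff_idem_eq_zero (hA : D.IdemData ι κ e) {l : Λp} {w v : T l} {ρ σ : M}
    (hw : w ∈ D.Tset e l ρ) (h : ρ ≠ σ ∨ w ≠ v) : D.coeff l w (e σ) v = 0 := by
  rw [D.coeff_eq_repr w]
  obtain rfl | hρσ := eq_or_ne ρ σ
  · rw [hw.1 w, repr_c, Finsupp.single_eq_of_ne']
    simpa using h
  · rw [← hw.1 w, mul_assoc, hA.orth ρ σ hρσ, mul_zero, map_zero, Finsupp.zero_apply]

theorem coeff_eq_zero_of_mul_idem (hA : D.IdemData ι κ e) {l : Λp} {t v : T l} {σ : M} {a : A}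
    (ha : a * e σ = a) (hv : v ∉ D.Tset e l σ) : D.coeff l t a v = 0 := by
  rw [← ha, coeff_mul]
  refine Finset.sum_eq_zero fun w _ => ?_
  obtain ⟨ρ, hρ⟩ := hA.exists_idem l w
  rw [D.coeff_idem_eq_zero hA (w := w) (ρ := ρ) hρ ?_, mul_zero]
  by_contra! h
  obtain ⟨rfl, rfl⟩ := h
  exact hv hρ

theorem coeff_c_eq_zero_of_ne (hA : D.IdemData ι κ e) {l m : Λp} {t : T l} {s' : T m}
    {μ ν : M} (ht : t ∈ D.Tset e l μ) (hs' : s' ∈ D.Tset e m ν) (hμν : μ ≠ ν) (t' : T m)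
    (v : T l) : D.coeff l t (D.c m s' t') v = 0 := by
  rw [D.coeff_eq_repr t, D.c_mul_c_eq_zero hA ht hs' hμν, map_zero, Finsupp.zero_apply]

theorem coeff_eq_zero_of_mem_parab (hA : D.IdemData ι κ e) (hα : Monotone α) {l : Λp}
    {t v : T l} (ht : t ∈ D.Tplus e ι κ α l) (hv : v ∉ D.Tplus e ι κ α l) {a : A}
    (ha : a ∈ D.parab e ι κ α) : D.coeff l t a v = 0 := by
  obtain ⟨μ, htμ, hμ⟩ := ht
  suffices D.parab e ι κ α ≤
      LinearMap.ker (D.basis.coord ⟨l, (t, v)⟩ ∘ₗ LinearMap.mulLeft R (D.c l t t)) by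
    rw [D.coeff_eq_repr t]
    exact this ha
  refine Submodule.span_le.2 ?_
  rintro _ ⟨m, ε, s', t', hs', ht', rfl⟩
  rw [SetLike.mem_coe, LinearMap.mem_ker, LinearMap.comp_apply, LinearMap.mulLeft_apply,
    Module.Basis.coord_apply, ← D.coeff_eq_repr]
  cases ε with
  | true =>
    obtain ⟨ν, hs'ν, hν⟩ := hs'
    obtain rfl | hμν := eq_or_ne μ ν
    · refine D.coeff_c_eq_zero_of_not_le (fun hml => ?_) _ _ _ _
      exact (hα ((hA.order_iff m l).2 hml)).not_gt (hμ ▸ hν)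
    · exact D.coeff_c_eq_zero_of_ne hA htμ hs'ν hμν _ _
  | false =>
    obtain ⟨ν, hs'ν, hν⟩ := hs'
    obtain ⟨σ, ht'σ, hσ⟩ := ht'
    obtain rfl | hμν := eq_or_ne μ ν
    · exact D.coeff_eq_zero_of_mul_idem hA (ht'σ.1 s') fun hvσ =>
        hv ⟨σ, hvσ, hμ.trans (hν.symm.trans hσ)⟩
    · exact D.coeff_c_eq_zero_of_ne hA htμ hs'ν hμν _ _

theorem coeff_eq_zero_of_mem_Jset (hA : D.IdemData ι κ e) (hα : Monotone α) {l : Λp}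
    (ε : Bool) {t v : T l} (ht : t ∈ D.Jset e ι κ α l ε) (hv : v ∉ D.Jset e ι κ α l ε) {a : A}
    (ha : a ∈ D.parab e ι κ α) : D.coeff l t a v = 0 := by
  cases ε with
  | false => exact D.coeff_eq_zero_of_mem_parab hA hα ht hv ha
  | true => exact absurd trivial hv

end Idempotents

end CellDatum

section FunctionModules

variable {S R ι : Type*} [Semiring S] [CommSemiring R]

theorem LinearMap.map_smul_of_map_smul_single {κ : Type*} [Fintype κ] [DecidableEq κ]
    [Module S (κ → R)] [SMulCommClass S R (κ → R)] [Module S (ι → R)]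
    [SMulCommClass S R (ι → R)] (F : (κ → R) →ₗ[R] ι → R)
    (hF : ∀ (a : S) (t : κ), F (a • Pi.single t 1) = a • F (Pi.single t 1)) (a : S)
    (x : κ → R) : F (a • x) = a • F x := by
  rw [pi_eq_sum_univ' x]
  simp only [Finset.smul_sum, map_sum, smul_comm a (x _), map_smul, hF]

theorem extend_subtype_val_eq_zero {s : Set ι} (x : s → R) {t : ι} (ht : t ∉ s) :
    Function.extend Subtype.val x 0 t = 0 :=
  Function.extend_apply' _ _ _ fun ⟨w, hw⟩ => ht (hw ▸ w.2)

theorem extend_subtype_val_comp (s : Set ι) (g : ι → R) :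
    Function.extend (Subtype.val : s → ι) (g ∘ Subtype.val) 0 = s.indicator g := by
  funext v
  by_cases hv : v ∈ s
  · rw [Set.indicator_of_mem hv]
    exact Subtype.val_injective.extend_apply _ _ (⟨v, hv⟩ : s)
  · rw [Set.indicator_of_notMem hv, extend_subtype_val_eq_zero _ hv]

variable [DecidableEq ι]

theorem extend_subtype_val_single {s : Set ι} (t : s) :
    Function.extend Subtype.val (Pi.single t (1 : R)) 0 = Pi.single (t : ι) 1 := by
  have h : (Pi.single t (1 : R) : s → R) = Pi.single (t : ι) 1 ∘ Subtype.val := by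
    funext v
    simp [Pi.single_apply, Subtype.ext_iff]
  rw [h, extend_subtype_val_comp, Set.indicator_eq_self]
  exact (Pi.support_single_subset).trans (Set.singleton_subset_iff.2 t.2)

variable (s : Set ι) [Fintype s] [Module S (s → R)] [SMulCommClass S R (s → R)]
  [Module S (ι → R)] [SMulCommClass S R (ι → R)] (γ : S → ι → ι → R)

def extendByZeroₗ (hγ : ∀ (a : S) (t : ι), a • Pi.single t (1 : R) = γ a t)
    (hγs : ∀ (a : S) (t : s), a • Pi.single t (1 : R) = fun v : s => γ a t v)
    (hs : ∀ (a : S), ∀ t ∈ s, ∀ v ∉ s, γ a t v = 0) : (s → R) →ₗ[S] ι → R where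
  toFun x := Function.extend Subtype.val x 0
  map_add' := (Function.ExtendByZero.linearMap R Subtype.val).map_add
  map_smul' := (Function.ExtendByZero.linearMap R (Subtype.val : s → ι)).map_smul_of_map_smul_single
    fun a t => by
      change Function.extend Subtype.val (a • (Pi.single t (1 : R) : s → R)) (0 : ι → R) =
        a • Function.extend Subtype.val (Pi.single t (1 : R) : s → R) (0 : ι → R)
      rw [extend_subtype_val_single, hγ, hγs]
      change Function.extend Subtype.val (γ a t ∘ Subtype.val) (0 : ι → R) = _
      rw [extend_subtype_val_comp, Set.indicator_eq_self]
      exact fun v hv => by_contra fun hvs => hv (hs a t t.2 v hvs)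

variable {s γ}
variable {hγ : ∀ (a : S) (t : ι), a • Pi.single t (1 : R) = γ a t}
  {hγs : ∀ (a : S) (t : s), a • Pi.single t (1 : R) = fun v : s => γ a t v}
  {hs : ∀ (a : S), ∀ t ∈ s, ∀ v ∉ s, γ a t v = 0}

theorem extendByZeroₗ_apply (x : s → R) :
    extendByZeroₗ s γ hγ hγs hs x = Function.extend Subtype.val x 0 := rfl

theorem extendByZeroₗ_injective : Function.Injective (extendByZeroₗ s γ hγ hγs hs) :=
  Function.extend_injective Subtype.val_injective (0 : ι → R)

theorem extendByZeroₗ_single (t : s) :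
    extendByZeroₗ s γ hγ hγs hs (Pi.single t 1) = Pi.single (t : ι) 1 :=
  extend_subtype_val_single t

theorem extendByZeroₗ_surjective (huniv : ∀ v, v ∈ s) :
    Function.Surjective (extendByZeroₗ s γ hγ hγs hs) := fun y =>
  ⟨y ∘ Subtype.val, by
    rw [extendByZeroₗ_apply, extend_subtype_val_comp, Set.indicator_eq_self]
    exact fun v _ => huniv v⟩

end FunctionModules

section Orthogonality

open Matrix

theorem formSum_eq_dotProduct {R ι : Type u} [CommRing R] [Fintype ι] (φ : ι → ι → R)
    (x y : ι → R) : formSum φ x y = x ᵥ* of φ ⬝ᵥ y := by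
  rw [← dotProduct_mulVec]
  simp only [formSum, dotProduct, mulVec, of_apply, Finset.mul_sum, mul_assoc]

theorem forall_formSum_eq_zero_iff {R ι : Type u} [CommRing R] [Fintype ι] (φ : ι → ι → R)
    (x : ι → R) : (∀ y, formSum φ x y = 0) ↔ x ᵥ* of φ = 0 := by
  simp only [formSum_eq_dotProduct, dotProduct_eq_zero_iff]

variable {R ι : Type*} [CommRing R] [Fintype ι] (φ : ι → ι → R)

theorem vecMul_extend_subtype_val_apply {s : Set ι} [Fintype s] (x : s → R) (u : ι) :
    (Function.extend Subtype.val x 0 ᵥ* of φ) u = ∑ t : s, x t * φ t u := by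
  classical
  rw [vecMul, dotProduct, ← Fintype.sum_subtype_add_sum_subtype (· ∈ s)]
  rw [Finset.sum_eq_zero (s := Finset.univ) (fun (v : {v // v ∉ s}) _ => by
      rw [extend_subtype_val_eq_zero x v.2, zero_mul]), add_zero]
  congr! 2 with t
  exact Subtype.val_injective.extend_apply x 0 t

theorem vecMul_apply_eq_zero_of_support_subset {P : Set ι} {y : ι → R} (hy : ∀ t ∉ P, y t = 0)
    {u : ι} (hu : ∀ t ∈ P, φ t u = 0) : (y ᵥ* of φ) u = 0 :=
  Finset.sum_eq_zero fun t _ => by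
    change y t * φ t u = 0
    by_cases ht : t ∈ P
    · rw [hu t ht, mul_zero]
    · rw [hy t ht, zero_mul]

variable {φ} {P N : Set ι}

theorem extend_vecMul_eq_zero_iff [Fintype P] (hcover : ∀ u, u ∈ P ∨ u ∈ N)
    (hPN : ∀ s ∈ P, ∀ t ∈ N, φ s t = 0) (x : P → R) :
    Function.extend Subtype.val x 0 ᵥ* of φ = 0 ↔ ∀ u ∈ P, ∑ t : P, x t * φ t u = 0 := by
  simp only [← vecMul_extend_subtype_val_apply]
  refine ⟨fun h u _ => by rw [h, Pi.zero_apply], fun h => funext fun u => ?_⟩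
  exact (hcover u).elim (h u) fun hu => vecMul_apply_eq_zero_of_support_subset φ
    (fun t => extend_subtype_val_eq_zero x) fun t ht => hPN t ht u hu

theorem forall_vecMul_apply_eq_zero_iff (hcover : ∀ u, u ∈ P ∨ u ∈ N)
    (hφ : ∀ s ∈ P, ∀ t ∈ N, φ s t = 0 ∧ φ t s = 0) (y : ι → R) :
    (∀ u ∈ N, (y ᵥ* of φ) u = 0) ↔
      ∃ x : P → R, (Function.extend Subtype.val x 0 - y) ᵥ* of φ = 0 := by
  have hext (x : P → R) : ∀ u ∈ N, (Function.extend Subtype.val x 0 ᵥ* of φ) u = 0 :=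
    fun u hu => vecMul_apply_eq_zero_of_support_subset φ (fun t => extend_subtype_val_eq_zero x)
      fun t ht => (hφ t ht u hu).1
  constructor
  · refine fun hy => ⟨y ∘ Subtype.val, funext fun u => ?_⟩
    rcases hcover u with hu | hu
    · refine vecMul_apply_eq_zero_of_support_subset φ (P := Pᶜ) (fun t ht => ?_)
        fun t ht => (hφ u hu t ((hcover t).resolve_left ht)).2
      rw [extend_subtype_val_comp, Pi.sub_apply, Set.indicator_of_mem (not_not.1 ht), sub_self]
    · rw [sub_vecMul, Pi.sub_apply, hy u hu, sub_zero]
      exact hext _ u hu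
  · rintro ⟨x, hx⟩ u hu
    have h := congrFun hx u
    rwa [sub_vecMul, Pi.sub_apply, hext x u hu, zero_sub, Pi.zero_apply, neg_eq_zero] at h

end Orthogonality

theorem Submodule.exists_exact_of_quotients {S S' Z₀ Z₁ W : Type*} [Ring S] [Ring S']
    [AddCommGroup Z₀] [Module S Z₀] [AddCommGroup Z₁] [Module S Z₁] [AddCommGroup W]
    [Module S W] [Module S' W] {radW : Submodule S' W} [Module S (W ⧸ radW)]
    (hmk : ∀ (a : S) (y : W),
      (Submodule.Quotient.mk (a • y) : W ⧸ radW) = a • Submodule.Quotient.mk y)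
    {rad₀ : Submodule S Z₀} {rad₁ : Submodule S Z₁} (F : Z₀ →ₗ[S] W) (g₀ : W →ₗ[S] Z₁)
    (hg₀ : Function.Surjective g₀) (hF : ∀ x, F x ∈ radW ↔ x ∈ rad₀)
    (hg : ∀ y, g₀ y ∈ rad₁ ↔ ∃ x, F x - y ∈ radW) :
    ∃ (f : (Z₀ ⧸ rad₀) →ₗ[S] W ⧸ radW) (g : (W ⧸ radW) →ₗ[S] Z₁ ⧸ rad₁),
      Function.Injective f ∧ Function.Surjective g ∧ LinearMap.range f = LinearMap.ker g := by
  let mkW : W →ₗ[S] W ⧸ radW :=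
    { toFun := Submodule.Quotient.mk
      map_add' := fun _ _ => Submodule.Quotient.mk_add radW
      map_smul' := hmk }
  have hker : rad₀ = LinearMap.ker (mkW ∘ₗ F) := by
    ext x
    rw [LinearMap.mem_ker, LinearMap.comp_apply, ← hF]
    exact (Submodule.Quotient.mk_eq_zero radW).symm
  let g' : W ⧸ radW →+ Z₁ ⧸ rad₁ :=
    QuotientAddGroup.lift radW.toAddSubgroup (rad₁.mkQ ∘ₗ g₀).toAddMonoidHom fun y hy =>
      (Submodule.Quotient.mk_eq_zero rad₁).2 ((hg y).2 ⟨0, by simpa using hy⟩)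
  let g : W ⧸ radW →ₗ[S] Z₁ ⧸ rad₁ :=
    { g' with
      map_smul' := fun a q => Submodule.Quotient.induction_on radW q fun y => by
        rw [← hmk]
        exact (rad₁.mkQ ∘ₗ g₀).map_smul a y }
  have hg_mk (y : W) : g (Submodule.Quotient.mk y) = rad₁.mkQ (g₀ y) := rfl
  refine ⟨rad₀.liftQ (mkW ∘ₗ F) hker.le, g,
    LinearMap.ker_eq_bot.1 (Submodule.ker_liftQ_eq_bot' _ _ hker), fun q => ?_, ?_⟩
  · obtain ⟨z, rfl⟩ := rad₁.mkQ_surjective q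
    obtain ⟨y, rfl⟩ := hg₀ z
    exact ⟨_, hg_mk y⟩
  · ext q
    obtain ⟨y, rfl⟩ := Submodule.Quotient.mk_surjective radW q
    rw [LinearMap.mem_ker, hg_mk, Submodule.mkQ_apply, Submodule.Quotient.mk_eq_zero, hg,
      LinearMap.mem_range, (Submodule.Quotient.mk_surjective rad₀).exists]
    simp only [Submodule.liftQ_apply, LinearMap.comp_apply]
    exact exists_congr fun x => Submodule.Quotient.eq radW

theorem stmt_16_general
    {R A : Type u} [CommRing R] [Ring A] [Algebra R A]
    {Λp : Type u} [PartialOrder Λp]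
    {T : Λp → Type u} [∀ l, Fintype (T l)] [∀ l, DecidableEq (T l)]
    {Λt M X : Type u} [PartialOrder Λt] [PartialOrder X] [Fintype M]
    (D : CellDatum R A Λp T)
    (ι : Λp → Λt) (κ : M → Λt) (e : M → A)
    (hA : D.IdemData ι κ e)
    (α : Λt → X) (hα : Monotone α)
    (φ : ∀ l, T l → T l → R) (hφ : D.FormData φ)
    -- standard module data for `A`
    [∀ l, Module Aᵐᵒᵖ (T l → R)] (hRStd : D.RightStd)
    (radW : ∀ l, Submodule Aᵐᵒᵖ (T l → R))
    (hradW : ∀ (l) (x : T l → R), x ∈ radW l ↔ ∀ y, formSum (φ l) x y = 0)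
    -- the parabolic type subalgebra `Ã^α` and its right standard module data
    (Asubt : Subalgebra R A) (hAsubt : Asubt.toSubmodule = D.parab e ι κ α)
    [∀ (l : Λp) (ε : Bool), Fintype ↥(D.Jset e ι κ α l ε)]
    [∀ (l : Λp) (ε : Bool), Module (↥Asubt)ᵐᵒᵖ (↥(D.Jset e ι κ α l ε) → R)]
    (hZtsmul : ∀ (l : Λp) (ε : Bool) (r : R) (a : (↥Asubt)ᵐᵒᵖ)
      (x : ↥(D.Jset e ι κ α l ε) → R), a • (r • x) = r • (a • x))
    (hZtact : ∀ (l : Λp) (ε : Bool) (t : ↥(D.Jset e ι κ α l ε)) (a : Asubt),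
      (op a) • (Pi.single t 1 : ↥(D.Jset e ι κ α l ε) → R) =
        fun v => D.coeff l t.1 a.1 v.1)
    (radZt : ∀ (l : Λp) (ε : Bool), Submodule (↥Asubt)ᵐᵒᵖ (↥(D.Jset e ι κ α l ε) → R))
    (hradZt : ∀ (l : Λp) (ε : Bool) (x : ↥(D.Jset e ι κ α l ε) → R),
      x ∈ radZt l ε ↔ ∀ s : ↥(D.Iset e ι κ α l ε),
        ∑ t, x t * φ l t.1 s.1 = 0) :
    ∀ l : Λp,
      letI : Module (↥Asubt)ᵐᵒᵖ (T l → R) :=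
        Module.compHom _ (RingHom.op Asubt.val.toRingHom)
      letI : Module (↥Asubt)ᵐᵒᵖ ((T l → R) ⧸ radW l) :=
        Module.compHom _ (RingHom.op Asubt.val.toRingHom)
      -- (i)
      (∃ F : (↥(D.Jset e ι κ α l false) → R) →ₗ[(↥Asubt)ᵐᵒᵖ] (T l → R),
        Function.Injective F ∧
        ∀ t : ↥(D.Jset e ι κ α l false), F (Pi.single t 1) = Pi.single t.1 1) ∧
      -- (ii)
      (∃ G : (↥(D.Jset e ι κ α l true) → R) ≃ₗ[(↥Asubt)ᵐᵒᵖ] (T l → R),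
        ∀ t : ↥(D.Jset e ι κ α l true), G (Pi.single t 1) = Pi.single t.1 1) ∧
      -- (iii) and (iv)
      (∃ (f : ((↥(D.Jset e ι κ α l false) → R) ⧸ radZt l false) →ₗ[(↥Asubt)ᵐᵒᵖ]
            ((T l → R) ⧸ radW l))
          (g : ((T l → R) ⧸ radW l) →ₗ[(↥Asubt)ᵐᵒᵖ]
            ((↥(D.Jset e ι κ α l true) → R) ⧸ radZt l true)),
        Function.Injective f ∧ Function.Surjective g ∧
        LinearMap.range f = LinearMap.ker g) := by
  intro l
  let : Module (↥Asubt)ᵐᵒᵖ (T l → R) := Module.compHom _ (RingHom.op Asubt.val.toRingHom)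
  let : Module (↥Asubt)ᵐᵒᵖ ((T l → R) ⧸ radW l) :=
    Module.compHom _ (RingHom.op Asubt.val.toRingHom)
  have : SMulCommClass (↥Asubt)ᵐᵒᵖ R (T l → R) := ⟨fun a r x => hRStd.1 l r _ x⟩
  have (ε : Bool) : SMulCommClass (↥Asubt)ᵐᵒᵖ R (↥(D.Jset e ι κ α l ε) → R) :=
    ⟨fun a r x => hZtsmul l ε r a x⟩
  let F (ε : Bool) := extendByZeroₗ (D.Jset e ι κ α l ε)
    (fun (a : (↥Asubt)ᵐᵒᵖ) t v => D.coeff l t a.unop.1 v)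
    (fun a t => hRStd.2 l t _) (fun a t => hZtact l ε t a.unop)
    (fun a t ht v hv => D.coeff_eq_zero_of_mem_Jset hA hα ε ht hv (hAsubt ▸ a.unop.2))
  let G := LinearEquiv.ofBijective (F true)
    ⟨extendByZeroₗ_injective, extendByZeroₗ_surjective fun _ => trivial⟩
  have hcover := D.mem_Tplus_or_mem_Tminus hA hα l
  have hφl := D.form_Tplus_Tminus (α := α) hA hφ l
  refine ⟨⟨F false, extendByZeroₗ_injective, extendByZeroₗ_single⟩,
    ⟨G, fun t => show F true _ = _ from extendByZeroₗ_single t⟩,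
    Submodule.exists_exact_of_quotients
      (fun a y => Submodule.Quotient.mk_smul (radW l) (op a.unop.1) y) (F false) G.symm
      G.symm.surjective (fun x => ?_) (fun y => ?_)⟩
  · rw [hradW, forall_formSum_eq_zero_iff, hradZt, Subtype.forall]
    exact extend_vecMul_eq_zero_iff (P := D.Jset e ι κ α l false) hcover
      (fun s hs t ht => (hφl s hs t ht).1) x
  · have hy (u : T l) :
        Matrix.vecMul y (Matrix.of (φ l)) u = ∑ t, G.symm.toLinearMap y t * φ l t u := by
      rw [← vecMul_extend_subtype_val_apply]
      exact congrArg (fun z => Matrix.vecMul z (Matrix.of (φ l)) u) (G.apply_symm_apply y).symm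
    simp only [hradZt, hradW, forall_formSum_eq_zero_iff, Subtype.forall, ← hy]
    exact forall_vecMul_apply_eq_zero_iff (P := D.Jset e ι κ α l false) hcover hφl y

/-- regarding `A`-modules as `Ã^α`-modules by restriction:
(i) there is an injective `Ã^α`-homomorphism `Z̃^{(λ,0)} → W^λ`, `c̃^{(λ,0)}_t ↦ c^λ_t`;
(ii) there is an `Ã^α`-isomorphism `Z̃^{(λ,1)} ≅ W^λ`, `c̃^{(λ,1)}_t ↦ c^λ_t`;
(iii) `L^λ` contains `L̃^{(λ,0)}` as an `Ã^α`-submodule;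
(iv) `L^λ / L̃^{(λ,0)} ≅ L̃^{(λ,1)}` as `Ã^α`-modules. -/
theorem stmt_16
    {R A : Type u} [CommRing R] [Ring A] [Algebra R A]
    {Λp : Type u} [PartialOrder Λp] [Fintype Λp]
    {T : Λp → Type u} [∀ l, Fintype (T l)] [∀ l, DecidableEq (T l)]
    {Λt M X : Type u} [PartialOrder Λt] [PartialOrder X] [Fintype M]
    (D : CellDatum R A Λp T)
    (ι : Λp → Λt) (κ : M → Λt) (e : M → A)
    (hA : D.IdemData ι κ e)
    (α : Λt → X) (hα : Monotone α)
    (φ : ∀ l, T l → T l → R) (hφ : D.FormData φ)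
    -- standard module data for `A`
    [∀ l, Module Aᵐᵒᵖ (T l → R)] (hRStd : D.RightStd)
    (radW : ∀ l, Submodule Aᵐᵒᵖ (T l → R))
    (hradW : ∀ (l) (x : T l → R), x ∈ radW l ↔ ∀ y, formSum (φ l) x y = 0)
    -- the parabolic type subalgebra `Ã^α` and its right standard module data
    (Asubt : Subalgebra R A) (hAsubt : Asubt.toSubmodule = D.parab e ι κ α)
    [∀ (l : Λp) (ε : Bool), Fintype ↥(D.Jset e ι κ α l ε)]
    [∀ (l : Λp) (ε : Bool), Module (↥Asubt)ᵐᵒᵖ (↥(D.Jset e ι κ α l ε) → R)]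
    (hZtsmul : ∀ (l : Λp) (ε : Bool) (r : R) (a : (↥Asubt)ᵐᵒᵖ)
      (x : ↥(D.Jset e ι κ α l ε) → R), a • (r • x) = r • (a • x))
    (hZtact : ∀ (l : Λp) (ε : Bool) (t : ↥(D.Jset e ι κ α l ε)) (a : Asubt),
      (op a) • (Pi.single t 1 : ↥(D.Jset e ι κ α l ε) → R) =
        fun v => D.coeff l t.1 a.1 v.1)
    (radZt : ∀ (l : Λp) (ε : Bool), Submodule (↥Asubt)ᵐᵒᵖ (↥(D.Jset e ι κ α l ε) → R))
    (hradZt : ∀ (l : Λp) (ε : Bool) (x : ↥(D.Jset e ι κ α l ε) → R),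
      x ∈ radZt l ε ↔ ∀ s : ↥(D.Iset e ι κ α l ε),
        ∑ t, x t * φ l t.1 s.1 = 0) :
    ∀ l : Λp,
      letI : Module (↥Asubt)ᵐᵒᵖ (T l → R) :=
        Module.compHom _ (RingHom.op Asubt.val.toRingHom)
      letI : Module (↥Asubt)ᵐᵒᵖ ((T l → R) ⧸ radW l) :=
        Module.compHom _ (RingHom.op Asubt.val.toRingHom)
      -- (i)
      (∃ F : (↥(D.Jset e ι κ α l false) → R) →ₗ[(↥Asubt)ᵐᵒᵖ] (T l → R),
        Function.Injective F ∧
        ∀ t : ↥(D.Jset e ι κ α l false), F (Pi.single t 1) = Pi.single t.1 1) ∧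
      -- (ii)
      (∃ G : (↥(D.Jset e ι κ α l true) → R) ≃ₗ[(↥Asubt)ᵐᵒᵖ] (T l → R),
        ∀ t : ↥(D.Jset e ι κ α l true), G (Pi.single t 1) = Pi.single t.1 1) ∧
      -- (iii) and (iv)
      (∃ (f : ((↥(D.Jset e ι κ α l false) → R) ⧸ radZt l false) →ₗ[(↥Asubt)ᵐᵒᵖ]
            ((T l → R) ⧸ radW l))
          (g : ((T l → R) ⧸ radW l) →ₗ[(↥Asubt)ᵐᵒᵖ]
            ((↥(D.Jset e ι κ α l true) → R) ⧸ radZt l true)),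
        Function.Injective f ∧ Function.Surjective g ∧
        LinearMap.range f = LinearMap.ker g) :=
  stmt_16_general D ι κ e hA α hα φ hφ hRStd radW hradW Asubt hAsubt hZtsmul hZtact radZt hradZt
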